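/- arXiv:1502.01875 — 10 statements merged into one kernel-verified Lean document; each statement's English description precedes it below -/
import Mathlib

section
/- For natural numbers p, q, r, s with p ≤ min(q, r, s) and p ≤ s, we have ∑_{i=0}^{p} (-1)^{q-i} C(r+1, i) C(s+1-i, p-i) = ∑_{i=0}^{p} (-1)^{q-i} C(r, i) C(s-i, p-i). -/
/-!
Write `Θ(p, r, s)` for the sum on the right (with `q` fixed). Pascal's rule in `r` gives
`Θ(p+1, r+1, s+1) = Θ(p+1, r, s+1) - Θ(p, r, s)`, the sign coming from shifting the summation
index in `(-1)^(q-i)`; Pascal's rule in `s` gives `Θ(p+1, r, s+1) = Θ(p+1, r, s) + Θ(p, r, s)`.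
The correction terms cancel, so `Θ` is invariant under `(r, s) ↦ (r+1, s+1)`.
-/

open Finset

def thetaSum (p q r s : ℕ) : ℤ :=
  ∑ i ∈ range (p + 1), (-1 : ℤ) ^ (q - i) * r.choose i * (s - i).choose (p - i)

theorem thetaSum_pascal_r {p q : ℕ} (r s : ℕ) (hq : p + 1 ≤ q) :
    thetaSum (p + 1) q (r + 1) (s + 1) = thetaSum (p + 1) q r (s + 1) - thetaSum p q r s := by
  rw [thetaSum, thetaSum, thetaSum, sum_range_succ', sum_range_succ' _ (p + 1), sub_eq_add_neg,
    ← sum_neg_distrib, add_right_comm, ← sum_add_distrib]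
  congr 1
  · refine sum_congr rfl fun i hi => ?_
    have hi : i < q := by have := mem_range.mp hi; omega
    rw [show q - i = q - (i + 1) + 1 by omega, Nat.choose_succ_succ',
      show s + 1 - (i + 1) = s - i by omega, show p + 1 - (i + 1) = p - i by omega]
    push_cast
    ring
  · simp

theorem thetaSum_pascal_s {p s : ℕ} (q r : ℕ) (hs : p + 1 ≤ s) :
    thetaSum (p + 1) q r (s + 1) = thetaSum (p + 1) q r s + thetaSum p q r s := by
  rw [thetaSum, thetaSum, thetaSum, sum_range_succ, sum_range_succ _ (p + 1), add_right_comm,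
    ← sum_add_distrib]
  congr 1
  · refine sum_congr rfl fun i hi => ?_
    have hi : i ≤ p := by have := mem_range.mp hi; omega
    rw [show s + 1 - i = s - i + 1 by omega, show p + 1 - i = p - i + 1 by omega,
      Nat.choose_succ_succ']
    push_cast
    ring
  · simp

theorem thetaSum_succ_succ {p s : ℕ} (q r : ℕ) (hq : p ≤ q) (hs : p ≤ s) :
    thetaSum p q (r + 1) (s + 1) = thetaSum p q r s := by
  cases p with
  | zero => simp [thetaSum]
  | succ p =>
    rw [thetaSum_pascal_r r s hq, thetaSum_pascal_s q r hs]
    ring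

theorem theta_shift_general (p q r s : ℕ) (hq : p ≤ q) (hs : p ≤ s) :
    ∑ i ∈ Finset.range (p + 1),
        (-1 : ℤ) ^ (q - i) * (r + 1).choose i * (s + 1 - i).choose (p - i)
      = ∑ i ∈ Finset.range (p + 1),
        (-1 : ℤ) ^ (q - i) * r.choose i * (s - i).choose (p - i) :=
  thetaSum_succ_succ q r hq hs

/-- Lemma (Theta1): For natural numbers `p ≤ min(q,r,s)`,
`∑_{i=0}^{p} (-1)^{q-i} C(r+1,i) C(s+1-i,p-i) = ∑_{i=0}^{p} (-1)^{q-i} C(r,i) C(s-i,p-i)`. -/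
theorem theta_shift (p q r s : ℕ) (hq : p ≤ q) (hr : p ≤ r) (hs : p ≤ s) :
    ∑ i ∈ Finset.range (p + 1),
        (-1 : ℤ) ^ (q - i) * (r + 1).choose i * (s + 1 - i).choose (p - i)
      = ∑ i ∈ Finset.range (p + 1),
        (-1 : ℤ) ^ (q - i) * r.choose i * (s - i).choose (p - i) :=
  theta_shift_general p q r s hq hs
end

section
/- For natural numbers k, l, m with l ≥ 1 and k < m ≤ k + l, we have ∑_{i=0}^{m} (-1)^{m-i} C(k+l, i) C(m+l-i-1, m-i) = 0. -/
/-!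
Substituting `X ↦ -X` in `(1 - X)^(k + l) · (1 - X)^(-l) = (1 - X)^k` gives
`(1 + X)^(k + l) · ∑ⱼ (-1)^j C(l - 1 + j, l - 1) X^j = (1 + X)^k`, whose coefficient of `X^m`
is the sum in question on the left and `C(k, m) = 0` on the right.
-/

open PowerSeries Finset

theorem PowerSeries.coeff_one_add_X_pow {R : Type*} [CommSemiring R] (n i : ℕ) :
    coeff i ((1 + X : R⟦X⟧) ^ n) = n.choose i := by
  rw [← Polynomial.coe_X, ← Polynomial.coe_one, ← Polynomial.coe_add, ← Polynomial.coe_pow,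
    Polynomial.coeff_coe, Polynomial.coeff_one_add_X_pow]

theorem PowerSeries.coeff_rescale_neg_one_invOneSubPow {R : Type*} [CommRing R] {l : ℕ}
    (hl : 0 < l) (j : ℕ) :
    coeff j (rescale (-1) (invOneSubPow R l).val) = (-1) ^ j * (l - 1 + j).choose (l - 1) := by
  rw [coeff_rescale, invOneSubPow_val_eq_mk_sub_one_add_choose_of_pos R l hl, coeff_mk]

theorem PowerSeries.one_add_X_pow_add_mul_rescale_invOneSubPow {R : Type*} [CommRing R]
    (a l : ℕ) :
    (1 + X : R⟦X⟧) ^ (a + l) * rescale (-1) (invOneSubPow R l).val = (1 + X) ^ a := by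
  have h := congrArg (rescale (-1 : R))
    (one_sub_pow_add_mul_invOneSubPow_val_eq_one_sub_pow R a l)
  simpa only [map_mul, map_pow, map_sub, map_one, rescale_neg_one_X, sub_neg_eq_add] using h

theorem sum_range_neg_one_pow_mul_choose_mul_choose {R : Type*} [CommRing R] (a l m : ℕ)
    (hl : 0 < l) :
    ∑ i ∈ range (m + 1), (-1 : R) ^ (m - i) * (a + l).choose i * (m + l - i - 1).choose (m - i) =
      a.choose m := by
  have h := congrArg (coeff m) (one_add_X_pow_add_mul_rescale_invOneSubPow (R := R) a l)
  rw [coeff_mul, Nat.sum_antidiagonal_eq_sum_range_succ_mk, coeff_one_add_X_pow] at h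
  rw [← h]
  refine sum_congr rfl fun i hi => ?_
  have him : i ≤ m := Nat.lt_succ_iff.mp (mem_range.mp hi)
  rw [coeff_one_add_X_pow, coeff_rescale_neg_one_invOneSubPow hl,
    show m + l - i - 1 = l - 1 + (m - i) by omega, Nat.choose_symm_add]
  ring

theorem phi_eq_zero_general (k l m : ℕ) (hl : 1 ≤ l) (hkm : k < m) :
    ∑ i ∈ Finset.range (m + 1),
        (-1 : ℤ) ^ (m - i) * (k + l).choose i * (m + l - i - 1).choose (m - i) = 0 := by
  rw [sum_range_neg_one_pow_mul_choose_mul_choose k l m hl, Nat.choose_eq_zero_of_lt hkm,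
    Nat.cast_zero]

/-- Lemma (Phi2): For natural numbers `k, l, m` with `l ≥ 1` and `k < m ≤ k + l`,
`∑_{i=0}^{m} (-1)^{m-i} C(k+l,i) C(m+l-i-1,m-i) = 0`. -/
theorem phi_eq_zero (k l m : ℕ) (hl : 1 ≤ l) (hkm : k < m) (hm : m ≤ k + l) :
    ∑ i ∈ Finset.range (m + 1),
        (-1 : ℤ) ^ (m - i) * (k + l).choose i * (m + l - i - 1).choose (m - i) = 0 :=
  phi_eq_zero_general k l m hl hkm
end

section
/- For natural numbers k, m, s with k ≥ 1 and m ≤ s < k + m, letting j = min(k, m), we have ∑_{i=0}^{j} (-1)^{k-i} C(m, i) C(s-i, k-i) = 0. -/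
/-!
Upper negation, `C(n, j) = (-1)^j C(j - n - 1, j)` with generalized binomial coefficients,
turns the `i`-th term into `C(m, i) C(k - s - 1, k - i)`: the sign `(-1)^(k-i)` cancels.
By Chu–Vandermonde the sum is then `C(m + k - s - 1, k)`, and `0 ≤ m + k - s - 1 < k`.
-/

open Finset

theorem Nat.cast_choose_eq_neg_one_pow_mul_ringChoose (n j : ℕ) :
    (n.choose j : ℤ) = (-1) ^ j * Ring.choose ((j : ℤ) - n - 1) j := by
  rw [show (j : ℤ) - n - 1 = -(n + 1 - j) by ring, Ring.choose_neg, Units.smul_def, smul_eq_mul,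
    Int.coe_negOnePow_natCast, show (n : ℤ) + 1 - j + j - 1 = n by ring, Ring.choose_natCast,
    ← mul_assoc, ← pow_add, Even.neg_one_pow ⟨j, rfl⟩, one_mul]

theorem sum_range_choose_mul_ringChoose {R : Type*} [CommRing R] [BinomialRing R]
    (m k : ℕ) (r : R) :
    ∑ i ∈ range (min k m + 1), (m.choose i : R) * Ring.choose r (k - i) =
      Ring.choose (m + r) k := by
  rw [Ring.add_choose_eq k (Commute.all _ _), Nat.sum_antidiagonal_eq_sum_range_succ
    (fun i j => Ring.choose (m : R) i * Ring.choose r j)]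
  simp only [Ring.choose_natCast]
  refine sum_subset (fun i => by simp only [mem_range]; omega) fun i hi hik => ?_
  simp only [mem_range] at hi hik
  simp [Nat.choose_eq_zero_of_lt (show m < i by omega)]

theorem psi_zero_general (k m s : ℕ) (hms : m ≤ s) (hs : s < k + m) :
    ∑ i ∈ Finset.range (min k m + 1),
        (-1 : ℤ) ^ (k - i) * m.choose i * (s - i).choose (k - i) = 0 := by
  have hterm : ∀ i ∈ range (min k m + 1),
      (-1 : ℤ) ^ (k - i) * m.choose i * (s - i).choose (k - i) =
        m.choose i * Ring.choose ((k : ℤ) - s - 1) (k - i) := by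
    intro i hi
    have hik : i ≤ k := by simp only [mem_range] at hi; omega
    have his : i ≤ s := by simp only [mem_range] at hi; omega
    rw [Nat.cast_choose_eq_neg_one_pow_mul_ringChoose (s - i), Nat.cast_sub hik, Nat.cast_sub his,
      show (k : ℤ) - i - (s - i) - 1 = k - s - 1 by ring, mul_comm _ (m.choose i : ℤ),
      mul_assoc, ← mul_assoc ((-1 : ℤ) ^ _), ← pow_add, Even.neg_one_pow ⟨_, rfl⟩, one_mul]
  rw [sum_congr rfl hterm, sum_range_choose_mul_ringChoose,
    show (m : ℤ) + (k - s - 1) = ((m + k - s - 1 : ℕ) : ℤ) by omega, Ring.choose_natCast,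
    Nat.choose_eq_zero_of_lt (by omega), Nat.cast_zero]

/-- Lemma (Psi2): For natural numbers `k, m, s` with `k ≥ 1` and `m ≤ s < k + m`,
with `j = min(k,m)`, `∑_{i=0}^{j} (-1)^{k-i} C(m,i) C(s-i,k-i) = 0`. -/
theorem psi_zero (k m s : ℕ) (hk : 1 ≤ k) (hms : m ≤ s) (hs : s < k + m) :
    ∑ i ∈ Finset.range (min k m + 1),
        (-1 : ℤ) ^ (k - i) * m.choose i * (s - i).choose (k - i) = 0 :=
  psi_zero_general k m s hms hs
end

section
/- For natural numbers m < |Z| ≤ n, one has ∑_{B ⊆ Z, |B| ≤ m} (-1)^{m-|B|} C(|Z|-|B|-1, m-|B|) = 1; more precisely, for a finite set Z with |Z| > m, the sum over all subsets B of Z of cardinality at most m of (-1)^{m-|B|} C(|Z|-|B|-1, m-|B|) equals 1. -/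
/-!
Grouping the subsets by their size `k`, the sum becomes `∑ₖ C(n, k) (-1)^(m-k) C(n-k-1, m-k)`
with `n = |Z|`. Since `m < n`, the factor `(-1)^(m-k) C(n-k-1, m-k)` is the generalized binomial
coefficient `C(m - n, m - k)` with negative upper index, so the Chu–Vandermonde identity turns
the sum into `C(n + (m - n), m) = C(m, m) = 1`.
-/

open Finset

theorem Finset.sum_powerset_filter_card_le_apply_card {α β : Type*} [AddCommMonoid α]
    (f : ℕ → α) (s : Finset β) {m : ℕ} (hm : m ≤ #s) :
    ∑ t ∈ s.powerset with #t ≤ m, f #t = ∑ k ∈ range (m + 1), (#s).choose k • f k := by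
  rw [sum_filter, sum_powerset_apply_card (fun k => if k ≤ m then f k else 0),
    ← sum_range_add_sum_Ico _ (by omega : m + 1 ≤ #s + 1)]
  have hhigh : ∀ k ∈ Ico (m + 1) (#s + 1), (#s).choose k • (if k ≤ m then f k else 0) = 0 :=
    fun k hk => by rw [if_neg (by simp at hk; omega), smul_zero]
  rw [sum_eq_zero hhigh, add_zero]
  exact sum_congr rfl fun k hk => by rw [if_pos (by simp at hk; omega)]

lemma Ring.choose_natCast_sub_natCast {m n k : ℕ} (hk : k ≤ m) (hmn : m < n) :
    Ring.choose ((m : ℤ) - n) (m - k) = (-1) ^ (m - k) * ((n - k - 1).choose (m - k) : ℤ) := by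
  have hneg : (m : ℤ) - n = -((n - m : ℕ) : ℤ) := by omega
  have htop : ((n - m : ℕ) : ℤ) + (m - k : ℕ) - 1 = ((n - k - 1 : ℕ) : ℤ) := by omega
  rw [hneg, Ring.choose_neg, htop, Ring.choose_natCast, Units.smul_def, Int.coe_negOnePow_natCast,
    smul_eq_mul]

theorem Nat.sum_range_choose_mul_neg_one_pow_choose {m n : ℕ} (hmn : m < n) :
    ∑ k ∈ range (m + 1), (n.choose k : ℤ) * ((-1) ^ (m - k) * (n - k - 1).choose (m - k)) = 1 := by
  have vandermonde := Ring.add_choose_eq (R := ℤ) (r := n) (s := (m : ℤ) - n) m (Commute.all _ _)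
  rw [add_sub_cancel, Ring.choose_natCast, Nat.choose_self,
    Nat.sum_antidiagonal_eq_sum_range_succ (fun i j => Ring.choose (n : ℤ) i * Ring.choose _ j)]
    at vandermonde
  refine (sum_congr rfl fun k hk => ?_).trans vandermonde.symm
  rw [Ring.choose_natCast, Ring.choose_natCast_sub_natCast (by simpa [Nat.lt_succ_iff] using hk) hmn]

theorem sum_over_small_subsets_general {α : Type*} (m : ℕ) (Z : Finset α)
    (hZ : m < Z.card) :
    ∑ B ∈ Z.powerset.filter (fun B => B.card ≤ m),
        (-1 : ℤ) ^ (m - B.card) * (Z.card - B.card - 1).choose (m - B.card) = 1 := by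
  rw [sum_powerset_filter_card_le_apply_card
    (fun k => (-1 : ℤ) ^ (m - k) * (Z.card - k - 1).choose (m - k)) Z hZ.le]
  simpa only [nsmul_eq_mul] using Nat.sum_range_choose_mul_neg_one_pow_choose hZ

/-- For a finite set `Z` with `|Z| > m`, the sum over all subsets `B ⊆ Z` with `|B| ≤ m`
of `(-1)^{m-|B|} C(|Z|-|B|-1, m-|B|)` equals `1`. -/
theorem sum_over_small_subsets {α : Type*} [DecidableEq α] (m : ℕ) (Z : Finset α)
    (hZ : m < Z.card) :
    ∑ B ∈ Z.powerset.filter (fun B => B.card ≤ m),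
        (-1 : ℤ) ^ (m - B.card) * (Z.card - B.card - 1).choose (m - B.card) = 1 :=
  sum_over_small_subsets_general m Z hZ
end

section
/- For a finite set Z with |Z| > m and any subset B ⊆ Z with |B| ≤ m, the sum over all C with B ⊆ C ⊆ Z and |C| ≤ m of (-1)^{m-|C|} C(|Z|-|C|-1, m-|C|) equals 1. -/
/-!
With `K = m - |C|`, the summand `(-1)^K C(|Z| - |C| - 1, K)` is the truncated alternating sum of
`(-1)^|F \ C|` over the `F` with `C ⊆ F ⊆ Z` and `|F| ≤ m`: this is the partial row sum
`∑_{k ≤ K} (-1)^k C(n, k) = (-1)^K C(n - 1, K)` for `n = |Z \ C|`, which is positive because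
`|C| ≤ m < |Z|`. Exchanging the order of summation, each `F` contributes
`∑_{B ⊆ C ⊆ F} (-1)^|F \ C|`, the Möbius function of the Boolean lattice, which vanishes
unless `F = B`.
-/

open Finset

namespace Finset

theorem sum_powerset_filter_card_le_neg_one_pow {α : Type*} {s : Finset α} (hs : s.Nonempty)
    (k : ℕ) :
    ∑ t ∈ s.powerset with #t ≤ k, (-1 : ℤ) ^ #t = (-1) ^ k * (#s - 1).choose k := by
  obtain ⟨n, hn⟩ : ∃ n, #s = n + 1 := ⟨#s - 1, by have := hs.card_pos; omega⟩
  have hfiber : ∀ j ∈ range (k + 1),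
      {t ∈ {t ∈ s.powerset | #t ≤ k} | #t = j} = powersetCard j s := by
    intro j hj
    rw [mem_range] at hj
    ext t
    simp only [mem_filter, mem_powerset, mem_powersetCard]
    exact ⟨fun ⟨⟨hts, _⟩, htj⟩ => ⟨hts, htj⟩,
      fun ⟨hts, htj⟩ => ⟨⟨hts, by omega⟩, htj⟩⟩
  rw [← sum_fiberwise_of_maps_to (t := range (k + 1)) (g := card)
    (fun t ht => mem_range.2 (Nat.lt_succ_of_le (mem_filter.1 ht).2)),
    sum_congr rfl fun j hj => by rw [hfiber j hj, sum_powersetCard, hn, nsmul_eq_mul]]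
  simp_rw [hn, Nat.add_sub_cancel, mul_comm ((n + 1).choose _ : ℤ)]
  exact Int.alternating_sum_range_choose_eq_choose

variable {α M : Type*} [DecidableEq α] [AddCommMonoid M] {s t : Finset α}

theorem sum_Icc_eq_sum_powerset_sdiff_union (h : s ⊆ t) (f : Finset α → M) :
    ∑ u ∈ Icc s t, f u = ∑ v ∈ (t \ s).powerset, f (s ∪ v) := by
  rw [Icc_eq_image_powerset h, sum_image]
  intro v hv w hw hvw
  have hv' := disjoint_of_subset_left (mem_powerset.1 hv) sdiff_disjoint
  have hw' := disjoint_of_subset_left (mem_powerset.1 hw) sdiff_disjoint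
  simpa [union_sdiff_cancel_left hv'.symm, union_sdiff_cancel_left hw'.symm] using
    congrArg (· \ s) hvw

theorem sum_Icc_sdiff_eq_sum_powerset_sdiff (h : s ⊆ t) (f : Finset α → M) :
    ∑ u ∈ Icc s t, f (t \ u) = ∑ v ∈ (t \ s).powerset, f v := by
  apply sum_nbij' (t \ ·) (t \ ·)
  · intro u hu
    rw [mem_Icc] at hu
    exact mem_powerset.2 (sdiff_subset_sdiff le_rfl hu.1)
  · intro v hv
    rw [mem_powerset, subset_sdiff] at hv
    exact mem_Icc.2 ⟨subset_sdiff.2 ⟨h, hv.2.symm⟩, sdiff_subset⟩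
  · intro u hu
    exact sdiff_sdiff_eq_self (mem_Icc.1 hu).2
  · intro v hv
    exact sdiff_sdiff_eq_self (subset_sdiff.1 (mem_powerset.1 hv)).1
  · intro u _
    rfl

theorem sum_Icc_neg_one_pow_card_sdiff (h : s ⊆ t) :
    ∑ u ∈ Icc s t, (-1 : ℤ) ^ #(t \ u) = if s = t then 1 else 0 := by
  rw [sum_Icc_sdiff_eq_sum_powerset_sdiff h (fun v => (-1 : ℤ) ^ #v),
    sum_powerset_neg_one_pow_card]
  simp only [sdiff_eq_empty_iff_subset]
  exact if_congr ⟨fun hts => subset_antisymm h hts, fun hst => hst.ge⟩ rfl rfl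

theorem sum_Icc_filter_card_le_neg_one_pow_card_sdiff (h : s ⊂ t) {m : ℕ} (hm : #s ≤ m) :
    ∑ u ∈ Icc s t with #u ≤ m, (-1 : ℤ) ^ #(u \ s) =
      (-1) ^ (m - #s) * (#t - #s - 1).choose (m - #s) := by
  have hdisj : ∀ v ∈ (t \ s).powerset, Disjoint s v := fun v hv =>
    (disjoint_of_subset_left (mem_powerset.1 hv) sdiff_disjoint).symm
  have hterm : ∀ v ∈ (t \ s).powerset,
      (if #(s ∪ v) ≤ m then (-1 : ℤ) ^ #((s ∪ v) \ s) else 0) =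
        if #v ≤ m - #s then (-1 : ℤ) ^ #v else 0 := by
    intro v hv
    rw [card_union_of_disjoint (hdisj v hv), union_sdiff_cancel_left (hdisj v hv)]
    exact if_congr (by omega) rfl rfl
  rw [sum_filter, sum_Icc_eq_sum_powerset_sdiff_union h.subset, sum_congr rfl hterm,
    ← sum_filter, sum_powerset_filter_card_le_neg_one_pow (sdiff_nonempty.2 h.not_subset),
    card_sdiff_of_subset h.subset]

end Finset

/-- For a finite set `Z` with `|Z| > m` and `B ⊆ Z` with `|B| ≤ m`, the sum over all
`C` with `B ⊆ C ⊆ Z` and `|C| ≤ m` of `(-1)^{m-|C|} C(|Z|-|C|-1, m-|C|)` equals `1`. -/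
theorem sum_over_intermediate_subsets {α : Type*} [DecidableEq α] (m : ℕ)
    (Z B : Finset α) (hZ : m < Z.card) (hBZ : B ⊆ Z) (hB : B.card ≤ m) :
    ∑ C ∈ Z.powerset.filter (fun C => B ⊆ C ∧ C.card ≤ m),
        (-1 : ℤ) ^ (m - C.card) * (Z.card - C.card - 1).choose (m - C.card) = 1 := by
  set I := Z.powerset.filter (fun C => B ⊆ C ∧ C.card ≤ m)
  have mem_I : ∀ C, C ∈ I ↔ (B ⊆ C ∧ C ⊆ Z) ∧ #C ≤ m := fun C => by
    simp only [I, mem_filter, mem_powerset]; tauto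
  have above : ∀ C ∈ I, {F ∈ I | C ⊆ F} = {F ∈ Icc C Z | #F ≤ m} := fun C hC => by
    obtain ⟨⟨hBC, -⟩, -⟩ := (mem_I C).1 hC
    ext F; simp only [mem_filter, mem_I, mem_Icc]
    exact ⟨fun ⟨⟨⟨_, hFZ⟩, hFm⟩, hCF⟩ => ⟨⟨hCF, hFZ⟩, hFm⟩,
      fun ⟨⟨hCF, hFZ⟩, hFm⟩ => ⟨⟨⟨hBC.trans hCF, hFZ⟩, hFm⟩, hCF⟩⟩
  have below : ∀ F ∈ I, {C ∈ I | C ⊆ F} = Icc B F := fun F hF => by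
    obtain ⟨⟨-, hFZ⟩, hFm⟩ := (mem_I F).1 hF
    ext C; simp only [mem_filter, mem_I, mem_Icc]
    exact ⟨fun ⟨⟨⟨hBC, _⟩, _⟩, hCF⟩ => ⟨hBC, hCF⟩,
      fun ⟨hBC, hCF⟩ =>
        ⟨⟨⟨hBC, hCF.trans hFZ⟩, (card_le_card hCF).trans hFm⟩, hCF⟩⟩
  calc ∑ C ∈ I, (-1 : ℤ) ^ (m - #C) * (#Z - #C - 1).choose (m - #C)
      = ∑ C ∈ I, ∑ F ∈ I, if C ⊆ F then (-1 : ℤ) ^ #(F \ C) else 0 := by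
        refine sum_congr rfl fun C hC => ?_
        obtain ⟨⟨-, hCZ⟩, hCm⟩ := (mem_I C).1 hC
        replace hCZ : C ⊂ Z := Finset.ssubset_iff_subset_ne.2 ⟨hCZ, by rintro rfl; omega⟩
        rw [← sum_filter, above C hC, sum_Icc_filter_card_le_neg_one_pow_card_sdiff hCZ hCm]
    _ = ∑ F ∈ I, ∑ C ∈ I, if C ⊆ F then (-1 : ℤ) ^ #(F \ C) else 0 := sum_comm
    _ = ∑ F ∈ I, if B = F then 1 else 0 := by
        refine sum_congr rfl fun F hF => ?_
        rw [← sum_filter, below F hF, sum_Icc_neg_one_pow_card_sdiff ((mem_I F).1 hF).1.1]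
    _ = 1 := by
        rw [sum_ite_eq, if_pos ((mem_I B).2 ⟨⟨subset_rfl, hBZ⟩, hB⟩)]
end

section
/- Let X be an uncountable set, n a natural number, and S a function from finite subsets of X to finite subsets of X. Then there exist distinct elements z_1, ..., z_n in X such that for every nonempty index set I ⊆ {1,...,n} and every j ∈ {1,...,n}, if j < min(I) or j > max(I), then z_j ∉ S({z_i : i ∈ I}). -/
/-!
Build countable sets `M 0 ⊆ M 1 ⊆ ⋯` closed under `S`, each with infinitely many points
outside its predecessor; uncountability of `X` is what keeps the construction going. Choose
`z j` in `M (n - j) \ M (n - j - 1)`, in the order `j = 0, 1, …`, avoiding the finitely many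
values of `S` on sets of earlier points. If `I` lies above `j`, then `z '' I` lies in the
closed set `M (n - j - 1)`, which contains `S (z '' I)` but not `z j`; if `I` lies below `j`,
`z j` was chosen to avoid `S (z '' I)`.
-/

open Set

section

variable {X : Type*}

def IsClosedUnder (S : Finset X → Finset X) (C : Set X) : Prop :=
  ∀ F : Finset X, ↑F ⊆ C → ↑(S F) ⊆ C

theorem exists_countable_isClosedUnder_superset (S : Finset X → Finset X) {A : Set X}
    (hA : A.Countable) : ∃ C, A ⊆ C ∧ C.Countable ∧ IsClosedUnder S C := by
  let step (B : Set X) : Set X := B ∪ ⋃ F ∈ {F : Finset X | ↑F ⊆ B}, ↑(S F)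
  have step_countable {B : Set X} (hB : B.Countable) : (step B).Countable := by
    have : {F : Finset X | ↑F ⊆ B}.Countable := by
      refine ((countable_ofPred_finite_subset hB).preimage Finset.coe_injective).mono ?_
      exact fun F hF => ⟨F.finite_toSet, hF⟩
    exact hB.union (this.biUnion fun F _ => (S F).countable_toSet)
  have stage_mono : Monotone (step^[·] A) :=
    monotone_nat_of_le_succ fun k => by
      rw [Function.iterate_succ_apply']
      exact subset_union_left
  refine ⟨⋃ k, step^[k] A, subset_iUnion (step^[·] A) 0,
    countable_iUnion fun k => ?_, fun F hF => ?_⟩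
  · induction k with
    | zero => exact hA
    | succ k ih => rw [Function.iterate_succ_apply']; exact step_countable ih
  · obtain ⟨k, hk⟩ := stage_mono.directed_le.exists_mem_subset_of_finset_subset_biUnion hF
    refine Subset.trans ?_ (subset_iUnion _ (k + 1))
    rw [Function.iterate_succ_apply']
    exact subset_union_of_subset_right
      (subset_biUnion_of_mem (u := fun F => (↑(S F) : Set X)) hk) _

theorem exists_countable_isClosedUnder_superset_diff_infinite
    (hX : ¬ (univ : Set X).Countable) (S : Finset X → Finset X) {A : Set X}
    (hA : A.Countable) :
    ∃ C, A ⊆ C ∧ C.Countable ∧ IsClosedUnder S C ∧ (C \ A).Infinite := by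
  have hAc : Aᶜ.Infinite := fun hfin => hX (by simpa using hA.union hfin.countable)
  obtain ⟨T, hTA, hT, hTinf⟩ := hAc.exists_subset_countable_infinite
  obtain ⟨C, hC, hCc, hCS⟩ := exists_countable_isClosedUnder_superset S (hA.union hT)
  exact ⟨C, subset_union_left.trans hC, hCc, hCS,
    hTinf.mono fun x hx => ⟨hC (Or.inr hx), hTA hx⟩⟩

theorem exists_isClosedUnder_chain (hX : ¬ (univ : Set X).Countable)
    (S : Finset X → Finset X) : ∃ M : ℕ → Set X, Monotone M ∧
      (∀ k, IsClosedUnder S (M k)) ∧ ∀ k, (M (k + 1) \ M k).Infinite := by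
  have step (A : {A : Set X // A.Countable}) : ∃ C : {C : Set X // C.Countable},
      A.1 ⊆ C.1 ∧ IsClosedUnder S C.1 ∧ (C.1 \ A.1).Infinite := by
    obtain ⟨C, hAC, hC, hCS, hinf⟩ :=
      exists_countable_isClosedUnder_superset_diff_infinite hX S A.2
    exact ⟨⟨C, hC⟩, hAC, hCS, hinf⟩
  choose next hsub hclosed hinf using step
  let M (k : ℕ) : Set X := (next^[k + 1] ⟨∅, countable_empty⟩).1
  have hM (k : ℕ) : M (k + 1) = (next (next^[k + 1] ⟨∅, countable_empty⟩)).1 := by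
    simp only [M, Function.iterate_succ_apply']
  refine ⟨M, monotone_nat_of_le_succ fun k => ?_, fun k => ?_, fun k => ?_⟩
  · rw [hM]; exact hsub _
  · simp only [M, Function.iterate_succ_apply']; exact hclosed _
  · rw [hM]; exact hinf _

theorem exists_fin_mem_notMem_image_Iio [DecidableEq X] {n : ℕ} (P : Fin n → Set X)
    (hP : ∀ j, (P j).Infinite) (B : Finset X → Finset X) :
    ∃ z : Fin n → X, ∀ j, z j ∈ P j ∧ z j ∉ B ((Finset.Iio j).image z) := by
  induction n with
  | zero => exact ⟨Fin.elim0, fun j => j.elim0⟩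
  | succ n ih =>
    obtain ⟨z, hz⟩ := ih (P ∘ Fin.castSucc) fun j => hP _
    obtain ⟨x, hxP, hxB⟩ :=
      ((hP (Fin.last n)).sdiff (B (Finset.univ.image z)).finite_toSet).nonempty
    have himage (s : Finset (Fin n)) :
        (s.map Fin.castSuccEmb).image (Fin.snoc z x : Fin (n + 1) → X) = s.image z := by
      rw [Finset.map_eq_image, Finset.image_image]
      congr 1
      exact Fin.snoc_comp_castSucc
    refine ⟨Fin.snoc z x, Fin.lastCases ?_ fun j => ?_⟩
    · rw [Fin.Iio_last_eq_map, himage, Fin.snoc_last]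
      exact ⟨hxP, hxB⟩
    · rw [Fin.Iio_castSucc, himage, Fin.snoc_castSucc]
      exact hz j

end

/-- Lemma: Let `X` be an uncountable set, `n < ω`, and `S : [X]^{<ω} → [X]^{<ω}`.
Then there are distinct `z_1, …, z_n ∈ X` such that `z_j ∉ S({z_i : i ∈ I})`
whenever `j < min I` or `j > max I`. -/
theorem free_sequence_of_uncountable {X : Type*} [DecidableEq X]
    (hX : ¬ (Set.univ : Set X).Countable) (n : ℕ) (S : Finset X → Finset X) :
    ∃ z : Fin n → X, Function.Injective z ∧
      ∀ (I : Finset (Fin n)) (j : Fin n), I.Nonempty →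
        ((∀ i ∈ I, j < i) ∨ (∀ i ∈ I, i < j)) → z j ∉ S (I.image z) := by
  obtain ⟨M, hM, hMS, hMinf⟩ := exists_isClosedUnder_chain hX S
  let N (k : ℕ) : Set X := M (n - k)
  have hN : Antitone N := hM.comp_antitone fun a b h => Nat.sub_le_sub_left h n
  have hNinf (j : Fin n) : (N j \ N (j + 1)).Infinite := by
    have : n - j = n - (j + 1) + 1 := by omega
    simpa [N, this] using hMinf (n - (j + 1))
  obtain ⟨z, hz⟩ := exists_fin_mem_notMem_image_Iio (fun j : Fin n => N j \ N (j + 1)) hNinf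
    fun F => F.powerset.biUnion S
  have hlevel {i j : Fin n} (h : j < i) : z i ∈ N (j + 1) :=
    hN (Nat.succ_le_of_lt h) (hz i).1.1
  refine ⟨z, fun i j hij => ?_, fun I j _ hI => ?_⟩
  · by_contra hne
    rcases lt_or_gt_of_ne hne with h | h
    · exact (hz i).1.2 (hij ▸ hlevel h)
    · exact (hz j).1.2 (hij ▸ hlevel h)
  rcases hI with hI | hI
  · intro hmem
    refine (hz j).1.2 (hMS _ _ ?_ hmem)
    intro x hx
    obtain ⟨i, hi, rfl⟩ := Finset.mem_image.1 hx
    exact hlevel (hI i hi)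
  · have hsub : I.image z ⊆ (Finset.Iio j).image z :=
      Finset.image_subset_image fun i hi => Finset.mem_Iio.2 (hI i hi)
    exact fun hmem => (hz j).2 (Finset.mem_biUnion.2 ⟨_, Finset.mem_powerset.2 hsub, hmem⟩)
end

section
/- Let m ≤ p be natural numbers, X a set of cardinality at least ℵ_{p-1}, and S a map from subsets of X of cardinality at most m to finite subsets of X such that S(A) ∩ A = ∅ for every such A. Then there exists a subset Y of X with |Y| = p such that S(A) ∩ Y = ∅ for every A ⊆ Y with |A| ≤ m. -/
/-!
Apply the free set lemma to `B ↦ ⋃ {S A | A ⊆ B, |A| ≤ m}`, getting a free `Y` of size `p`.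
If `y ∈ S A ∩ Y` with `A ⊆ Y` small, then `y ∉ A` because `S A ∩ A = ∅`, so `A ⊆ Y \ {y}`
and `y` lies in the image of `Y \ {y}`, contradicting freeness.
-/

namespace Finset

variable {X : Type*} [DecidableEq X]

def biUnionSmallSubsets (m : ℕ) (S : Finset X → Finset X) (B : Finset X) : Finset X :=
  (B.powerset.filter (·.card ≤ m)).biUnion S

lemma subset_biUnionSmallSubsets {m : ℕ} {S : Finset X → Finset X} {A B : Finset X}
    (hAB : A ⊆ B) (hA : A.card ≤ m) : S A ⊆ biUnionSmallSubsets m S B :=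
  subset_biUnion_of_mem S (mem_filter.mpr ⟨mem_powerset.mpr hAB, hA⟩)

lemma disjoint_of_free_biUnionSmallSubsets {m : ℕ} {S : Finset X → Finset X} {Y : Finset X}
    (hS : ∀ A : Finset X, A.card ≤ m → Disjoint (S A) A)
    (hY : ∀ a ∈ Y, a ∉ biUnionSmallSubsets m S (Y.erase a))
    {A : Finset X} (hAY : A ⊆ Y) (hA : A.card ≤ m) : Disjoint (S A) Y := by
  refine disjoint_right.mpr fun y hyY hyS => ?_
  have hyA : y ∉ A := disjoint_left.mp (hS A hA) hyS
  have hA_erase : A ⊆ Y.erase y := fun x hx =>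
    mem_erase.mpr ⟨fun hxy => hyA (hxy ▸ hx), hAY hx⟩
  exact hY y hyY (subset_biUnionSmallSubsets hA_erase hA hyS)

end Finset

theorem exists_free_finset_general {X : Type*} [DecidableEq X] (m p : ℕ)
    (hX : Cardinal.aleph (p - 1) ≤ Cardinal.mk X)
    (freeSetLemma : ∀ (n : ℕ) (S' : Finset X → Finset X),
      Cardinal.aleph n ≤ Cardinal.mk X →
        ∃ A : Finset X, A.card = n + 1 ∧ ∀ a ∈ A, a ∉ S' (A.erase a))
    (S : Finset X → Finset X) (hS : ∀ A : Finset X, A.card ≤ m → Disjoint (S A) A) :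
    ∃ Y : Finset X, Y.card = p ∧ ∀ A ⊆ Y, A.card ≤ m → Disjoint (S A) Y := by
  rcases Nat.eq_zero_or_pos p with rfl | hp
  · exact ⟨∅, Finset.card_empty, fun A _ _ => Finset.disjoint_empty_right _⟩
  have hX' : Cardinal.aleph ((p - 1 : ℕ) : Ordinal) ≤ Cardinal.mk X := by
    rwa [Ordinal.natCast_sub, Nat.cast_one]
  obtain ⟨Y, hYcard, hYfree⟩ := freeSetLemma (p - 1) (Finset.biUnionSmallSubsets m S) hX'
  exact ⟨Y, by omega, fun A hAY hA =>
    Finset.disjoint_of_free_biUnionSmallSubsets hS hYfree hAY hA⟩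

/-- Lemma: let `m ≤ p`, `X` a set with `|X| ≥ ℵ_{p-1}`, and `S` a map from subsets of `X`
of cardinality at most `m` to finite subsets of `X` with `S(A) ∩ A = ∅`. Assuming the
Erdős–Hajnal free set lemma, there is `Y ∈ [X]^p` with `S(A) ∩ Y = ∅` for all `A ∈ [Y]^{≤ m}`. -/
theorem exists_free_finset {X : Type*} [DecidableEq X] (m p : ℕ) (hmp : m ≤ p)
    (hX : Cardinal.aleph (p - 1) ≤ Cardinal.mk X)
    (freeSetLemma : ∀ (n : ℕ) (S' : Finset X → Finset X),
      Cardinal.aleph n ≤ Cardinal.mk X →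
        ∃ A : Finset X, A.card = n + 1 ∧ ∀ a ∈ A, a ∉ S' (A.erase a))
    (S : Finset X → Finset X) (hS : ∀ A : Finset X, A.card ≤ m → Disjoint (S A) A) :
    ∃ Y : Finset X, Y.card = p ∧ ∀ A ⊆ Y, A.card ≤ m → Disjoint (S A) Y :=
  exists_free_finset_general m p hX freeSetLemma S hS
end

section
/- For natural numbers m < n, the operator norm of the canonical extension operator T_X : C(σ_m(2^X)) → C(σ_n(2^X)), defined by T_X(f)(χ_A) = ∑_{B ⊆ A, |B| ≤ m} (-1)^{m-|B|} C(|A|-|B|-1, m-|B|) f(χ_B) for m < |A| ≤ n, equals ∑_{k=0}^{m} C(n,k) C(n-k-1, m-k), provided |X| ≥ n. -/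
/-!
Write `S(a) = ∑_{k ≤ m} C(a,k) C(a-k-1, m-k)`. The bound `‖T‖ ≤ S(n)` is the triangle inequality
applied to the defining formula: grouping the subsets `B ⊆ A` by size, the coefficients of
`T f (χ_A)` have absolute values summing to `S(|A|) ≤ S(n)`. Equality is attained at `χ_A`
with `|A| = n` by the test function `χ_B ↦ (-1)^(m - |A ∩ B|)`, of norm `1`, which cancels
every sign in that formula.
-/

/-- The characteristic function of a finite set, as an element of `{0,1}^X`. -/
def chi {X : Type*} [DecidableEq X] (A : Finset X) : X → Bool := fun x => decide (x ∈ A)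

/-- `σ_n(2^X) = {χ_A : A ⊆ X, |A| ≤ n} ⊆ {0,1}^X`, with the product topology. -/
def sigmaSet (X : Type*) [DecidableEq X] (n : ℕ) : Set (X → Bool) :=
  {f | ∃ A : Finset X, A.card ≤ n ∧ f = chi A}

/-- The point `χ_A ∈ σ_n(2^X)` associated to a finite set `A` with `|A| ≤ n`. -/
def mkPt {X : Type*} [DecidableEq X] {n : ℕ} (A : Finset X) (h : A.card ≤ n) :
    sigmaSet X n := ⟨chi A, A, h, rfl⟩

open Finset

section Combinatorics

variable {X : Type*}

theorem sum_powerset_filter_card_le {R : Type*} [NonAssocSemiring R] (A : Finset X) (m : ℕ)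
    (f : ℕ → R) :
    ∑ B ∈ A.powerset.filter (fun B => B.card ≤ m), f B.card
      = ∑ k ∈ range (m + 1), (A.card.choose k : R) * f k := by
  rw [← sum_fiberwise_of_maps_to (t := range (m + 1)) (g := card)
    (fun B hB => mem_range.mpr (Nat.lt_succ_of_le (mem_filter.mp hB).2))]
  refine sum_congr rfl fun k hk => ?_
  have hfiber : (A.powerset.filter (fun B => B.card ≤ m)).filter (fun B => B.card = k)
      = A.powersetCard k := by
    rw [filter_filter, powersetCard_eq_filter]
    exact filter_congr fun B _ => by
      have := mem_range.mp hk
      constructor <;> intro h <;> omega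
  rw [hfiber, sum_congr rfl fun B hB => by rw [(mem_powersetCard.mp hB).2],
    sum_const, card_powersetCard, nsmul_eq_mul]

def extensionNorm (m n : ℕ) : ℝ :=
  ∑ k ∈ range (m + 1), (n.choose k : ℝ) * ((n - k - 1).choose (m - k))

theorem one_le_extensionNorm {m n : ℕ} (hmn : m ≤ n) : 1 ≤ extensionNorm m n := by
  calc (1 : ℝ) ≤ (n.choose m : ℝ) * ((n - m - 1).choose (m - m)) := by
        rw [Nat.sub_self, Nat.choose_zero_right, Nat.cast_one, mul_one]
        exact_mod_cast Nat.choose_pos hmn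
    _ ≤ extensionNorm m n :=
        single_le_sum (f := fun k => (n.choose k : ℝ) * ((n - k - 1).choose (m - k)))
          (fun k _ => by positivity) (self_mem_range_succ m)

theorem extensionNorm_mono {m a n : ℕ} (han : a ≤ n) : extensionNorm m a ≤ extensionNorm m n :=
  sum_le_sum fun k _ => by
    exact_mod_cast Nat.mul_le_mul (Nat.choose_le_choose _ han)
      (Nat.choose_le_choose _ (by omega))

def extensionSum (m : ℕ) (A : Finset X) (g : Finset X → ℝ) : ℝ :=
  ∑ B ∈ A.powerset.filter (fun B => B.card ≤ m),
    (-1 : ℝ) ^ (m - B.card) * ((A.card - B.card - 1).choose (m - B.card)) * g B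

theorem abs_extensionSum_le (m : ℕ) (A : Finset X) {g : Finset X → ℝ} {M : ℝ}
    (hg : ∀ B, |g B| ≤ M) :
    |extensionSum m A g| ≤ extensionNorm m A.card * M := by
  calc |extensionSum m A g|
      ≤ ∑ B ∈ A.powerset.filter (fun B => B.card ≤ m),
          ((A.card - B.card - 1).choose (m - B.card) : ℝ) * M := by
        refine (abs_sum_le_sum_abs _ _).trans (sum_le_sum fun B _ => ?_)
        rw [abs_mul, abs_mul, abs_pow, abs_neg, abs_one, one_pow, one_mul, Nat.abs_cast]
        exact mul_le_mul_of_nonneg_left (hg B) (by positivity)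
    _ = extensionNorm m A.card * M := by
        rw [← sum_mul, sum_powerset_filter_card_le A m
          (fun k => ((A.card - k - 1).choose (m - k) : ℝ)), extensionNorm]

theorem extensionSum_eq_extensionNorm (m : ℕ) (A : Finset X) {g : Finset X → ℝ}
    (hg : ∀ B ⊆ A, B.card ≤ m → g B = (-1) ^ (m - B.card)) :
    extensionSum m A g = extensionNorm m A.card := by
  have hterm : ∀ B ∈ A.powerset.filter (fun B => B.card ≤ m),
      (-1 : ℝ) ^ (m - B.card) * ((A.card - B.card - 1).choose (m - B.card)) * g B
        = ((A.card - B.card - 1).choose (m - B.card) : ℝ) := by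
    intro B hB
    obtain ⟨hBA, hBm⟩ := mem_filter.mp hB
    rw [hg B (mem_powerset.mp hBA) hBm, mul_right_comm, ← pow_add, ← two_mul, pow_mul]
    norm_num
  rw [extensionSum, sum_congr rfl hterm,
    sum_powerset_filter_card_le A m (fun k => ((A.card - k - 1).choose (m - k) : ℝ)),
    extensionNorm]

end Combinatorics

section TestFunction

variable {X : Type*} [DecidableEq X]

noncomputable def signTestFunction (m : ℕ) (A : Finset X) :
    BoundedContinuousFunction (sigmaSet X m) ℝ :=
  BoundedContinuousFunction.ofNormedAddCommGroup
    (fun g => (-1 : ℝ) ^ m * ∏ x ∈ A, (if g.1 x then (-1 : ℝ) else 1))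
    (continuous_const.mul <| continuous_finsetProd _ fun x _ =>
      (continuous_of_discreteTopology (f := fun b : Bool => if b then (-1 : ℝ) else 1)).comp
        ((continuous_apply x).comp continuous_subtype_val))
    1 (fun g => by
      rw [Real.norm_eq_abs, abs_mul, abs_pow, abs_neg, abs_one, one_pow, one_mul, abs_prod,
        prod_eq_one fun x _ => by split_ifs <;> simp])

theorem norm_signTestFunction_le (m : ℕ) (A : Finset X) : ‖signTestFunction m A‖ ≤ 1 := by
  unfold signTestFunction
  exact BoundedContinuousFunction.norm_ofNormedAddCommGroup_le _ zero_le_one _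

theorem signTestFunction_mkPt {m : ℕ} {A B : Finset X} (hB : B.card ≤ m) (hBA : B ⊆ A) :
    signTestFunction m A (mkPt B hB) = (-1) ^ (m - B.card) := by
  simp only [signTestFunction, BoundedContinuousFunction.coe_ofNormedAddCommGroup, mkPt, chi,
    decide_eq_true_eq]
  rw [← prod_filter, prod_const, filter_mem_eq_inter, inter_eq_right.mpr hBA,
    ← Nat.sub_add_cancel hB, pow_add, mul_assoc, ← pow_add, ← two_mul, pow_mul]
  norm_num

end TestFunction

/-- If `|X| ≥ n` and `m < n`, then the canonical extension operator
`T_X : C(σ_m(2^X)) → C(σ_n(2^X))`, determined by `T_X f(χ_A) = f(χ_A)` for `|A| ≤ m` and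
`T_X f(χ_A) = ∑_{B ⊆ A, |B| ≤ m} (-1)^{m-|B|} C(|A|-|B|-1, m-|B|) f(χ_B)` for `m < |A| ≤ n`,
has operator norm `∑_{k=0}^{m} C(n,k) C(n-k-1, m-k)`. -/
theorem norm_canonical_extension_operator {X : Type*} [DecidableEq X] (m n : ℕ) (hmn : m < n)
    (hX : (n : Cardinal) ≤ Cardinal.mk X)
    (T : BoundedContinuousFunction (sigmaSet X m) ℝ →L[ℝ]
          BoundedContinuousFunction (sigmaSet X n) ℝ)
    (hext : ∀ (f : BoundedContinuousFunction (sigmaSet X m) ℝ) (A : Finset X)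
      (hA : A.card ≤ m), T f (mkPt A (hA.trans hmn.le)) = f (mkPt A hA))
    (hform : ∀ (f : BoundedContinuousFunction (sigmaSet X m) ℝ) (A : Finset X)
      (hA : A.card ≤ n), m < A.card →
        T f (mkPt A hA) = ∑ B ∈ A.powerset.filter (fun B => B.card ≤ m),
          (-1 : ℝ) ^ (m - B.card) * ((A.card - B.card - 1).choose (m - B.card)) *
            (if h : B.card ≤ m then f (mkPt B h) else 0)) :
    ‖T‖ = ∑ k ∈ Finset.range (m + 1), (n.choose k : ℝ) * ((n - k - 1).choose (m - k)) := by
  change ‖T‖ = extensionNorm m n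
  have hS : 1 ≤ extensionNorm m n := one_le_extensionNorm hmn.le
  apply le_antisymm
  · refine T.opNorm_le_bound (by linarith) fun f => ?_
    rw [BoundedContinuousFunction.norm_le (by positivity)]
    rintro ⟨_, A, hA, rfl⟩
    change ‖T f (mkPt A hA)‖ ≤ _
    by_cases hAm : A.card ≤ m
    · rw [hext f A hAm]
      exact (f.norm_coe_le_norm _).trans (le_mul_of_one_le_left (norm_nonneg f) hS)
    · rw [hform f A hA (by omega), Real.norm_eq_abs]
      refine (abs_extensionSum_le m A fun B => ?_).trans
        (mul_le_mul_of_nonneg_right (extensionNorm_mono hA) (norm_nonneg f))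
      split_ifs
      exacts [f.norm_coe_le_norm _, by simp]
  · obtain ⟨s, hs⟩ := Cardinal.exists_finset_le_card X n hX
    obtain ⟨A, -, hAn⟩ := exists_subset_card_eq hs
    have hvalue : T (signTestFunction m A) (mkPt A hAn.le) = extensionNorm m n := by
      rw [hform _ A hAn.le (by omega), ← hAn]
      exact extensionSum_eq_extensionNorm m A fun B hBA hB => by
        rw [dif_pos hB, signTestFunction_mkPt hB hBA]
    calc extensionNorm m n ≤ ‖T (signTestFunction m A)‖ :=
          hvalue ▸ (le_abs_self _).trans ((T _).norm_coe_le_norm _)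
      _ ≤ ‖T‖ := (T.le_opNorm_of_le (norm_signTestFunction_le m A)).trans_eq (mul_one _)
end

section
/- Let X be a set, Y ⊆ X, and m < n natural numbers. Define e : C(σ_m(2^Y)) → C(σ_m(2^X)) by e(f)(χ_A) = f(χ_{A∩Y}) and r : C(σ_n(2^X)) → C(σ_n(2^Y)) by r(f)(χ_A) = f(χ_A) (restriction). If T : C(σ_m(2^X)) → C(σ_n(2^X)) is an extension operator, then T|_Y := r ∘ T ∘ e is an extension operator C(σ_m(2^Y)) → C(σ_n(2^Y)) with ‖T|_Y‖ ≤ ‖T‖. -/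
open BoundedContinuousFunction

section Reevaluation

variable {α β E 𝕜 : Type*} [TopologicalSpace α] [TopologicalSpace β]
  [NontriviallyNormedField 𝕜] [SeminormedAddCommGroup E] [NormedSpace 𝕜 E]

theorem BoundedContinuousFunction.norm_le_norm_of_forall_exists_apply_eq
    {f : α →ᵇ E} {g : β →ᵇ E} (h : ∀ x, ∃ y, g x = f y) : ‖g‖ ≤ ‖f‖ :=
  (norm_le (norm_nonneg f)).mpr fun x => by
    obtain ⟨y, hy⟩ := h x
    exact hy ▸ norm_coe_le_norm f y

theorem ContinuousLinearMap.norm_le_one_of_forall_exists_apply_eq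
    (S : (α →ᵇ E) →L[𝕜] (β →ᵇ E)) (h : ∀ f x, ∃ y, S f x = f y) : ‖S‖ ≤ 1 :=
  S.opNorm_le_bound zero_le_one fun f => by
    simpa using norm_le_norm_of_forall_exists_apply_eq (h f)

end Reevaluation

theorem Finset.subtype_map_subtype {α : Type*} (p : α → Prop) [DecidablePred p]
    (s : Finset (Subtype p)) : (s.map (Function.Embedding.subtype p)).subtype p = s := by
  ext a
  simpa [Finset.mem_subtype] using fun h => a.2

theorem exists_eq_mkPt {X : Type*} [DecidableEq X] {n : ℕ} (x : sigmaSet X n) :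
    ∃ (A : Finset X) (hA : A.card ≤ n), x = mkPt A hA := by
  obtain ⟨A, hA, hx⟩ := x.2
  exact ⟨A, hA, Subtype.ext hx⟩

/-- Let `Y ⊆ X` and `m < n`. Given the embedding operator
`e : C(σ_m(2^Y)) → C(σ_m(2^X))`, `e(f)(χ_A) = f(χ_{A ∩ Y})`, the restriction operator
`r : C(σ_n(2^X)) → C(σ_n(2^Y))`, `r(f)(χ_A) = f(χ_A)`, and an extension operator
`T : C(σ_m(2^X)) → C(σ_n(2^X))`, the operator `T|_Y = r ∘ T ∘ e` is an extension
operator `C(σ_m(2^Y)) → C(σ_n(2^Y))` with `‖T|_Y‖ ≤ ‖T‖`. -/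
theorem restricted_extension_operator {X : Type*} [DecidableEq X]
    (Y : Set X) [DecidablePred (· ∈ Y)] (m n : ℕ) (hmn : m < n)
    (e : BoundedContinuousFunction (sigmaSet Y m) ℝ →L[ℝ]
          BoundedContinuousFunction (sigmaSet X m) ℝ)
    (he : ∀ (g : BoundedContinuousFunction (sigmaSet Y m) ℝ) (A : Finset X)
      (hA : A.card ≤ m),
        e g (mkPt A hA) = g (mkPt (A.subtype (· ∈ Y))
          (le_trans (by rw [Finset.card_subtype]; exact Finset.card_filter_le _ _) hA)))
    (r : BoundedContinuousFunction (sigmaSet X n) ℝ →L[ℝ]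
          BoundedContinuousFunction (sigmaSet Y n) ℝ)
    (hr : ∀ (f : BoundedContinuousFunction (sigmaSet X n) ℝ) (B : Finset Y)
      (hB : B.card ≤ n),
        r f (mkPt B hB) = f (mkPt (B.map (Function.Embedding.subtype (· ∈ Y)))
          (by rw [Finset.card_map]; exact hB)))
    (T : BoundedContinuousFunction (sigmaSet X m) ℝ →L[ℝ]
          BoundedContinuousFunction (sigmaSet X n) ℝ)
    (hT : ∀ (f : BoundedContinuousFunction (sigmaSet X m) ℝ) (A : Finset X)
      (hA : A.card ≤ m), T f (mkPt A (hA.trans hmn.le)) = f (mkPt A hA)) :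
    (∀ (g : BoundedContinuousFunction (sigmaSet Y m) ℝ) (B : Finset Y)
      (hB : B.card ≤ m),
        (r.comp (T.comp e)) g (mkPt B (hB.trans hmn.le)) = g (mkPt B hB)) ∧
    ‖r.comp (T.comp e)‖ ≤ ‖T‖ := by
  constructor
  · intro g B hB
    have hBX : (B.map (Function.Embedding.subtype (· ∈ Y))).card ≤ m := by
      rwa [Finset.card_map]
    simp only [ContinuousLinearMap.comp_apply, hr, hT _ _ hBX, he, Finset.subtype_map_subtype]
  · have he_norm : ‖e‖ ≤ 1 := e.norm_le_one_of_forall_exists_apply_eq fun g x => by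
      obtain ⟨A, hA, rfl⟩ := exists_eq_mkPt x
      exact ⟨_, he g A hA⟩
    have hr_norm : ‖r‖ ≤ 1 := r.norm_le_one_of_forall_exists_apply_eq fun f x => by
      obtain ⟨B, hB, rfl⟩ := exists_eq_mkPt x
      exact ⟨_, hr f B hB⟩
    calc ‖r.comp (T.comp e)‖ ≤ ‖r‖ * (‖T‖ * ‖e‖) :=
          (r.opNorm_comp_le _).trans (by gcongr; exact T.opNorm_comp_le e)
      _ ≤ 1 * (‖T‖ * 1) := by gcongr
      _ = ‖T‖ := by ring
end

section
/- For each natural number m ≥ 1, there exists a regular extension operator R : C(S_m) → C(B_1^+), i.e., a bounded linear operator of norm 1 which is positive, preserves constants, and satisfies R(f)|_{S_m} = f, where S_m ⊆ B_1^+ is the set of points whose coordinates take only the values 0 or 1/m, and B_1^+ = {z ∈ [0,∞)^X : ∑_i z_i ≤ 1} with the product topology, for X any set. -/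
/-- `B_1^+ = {z ∈ [0,∞)^X : ∑_i z_i ≤ 1}`, with the product topology. -/
def Bplus (X : Type*) : Set (X → ℝ) :=
  {z | (∀ i, 0 ≤ z i) ∧ ∀ s : Finset X, ∑ i ∈ s, z i ≤ 1}

/-- `S_m ⊆ B_1^+`: the set of points whose coordinates take only the values `0` or `1/m`,
i.e. `S_m = {m⁻¹ χ_A : A ⊆ X, |A| ≤ m}`. -/
def Sm (X : Type*) [DecidableEq X] (m : ℕ) : Set (X → ℝ) :=
  {z | ∃ A : Finset X, A.card ≤ m ∧ z = fun i => if i ∈ A then (m : ℝ)⁻¹ else 0}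

/-!
Fix `ε ∈ (1/(m+1), 1/m)` and a ramp `g` rising from `0` at `ε` to `1` at `1/m`. For `z ∈ B₁⁺` at
most `m` coordinates exceed `ε`, and `R f z` is the expectation of `f (m⁻¹ χ_A)` for the random set
`A ⊆ F_z` containing each `i` independently with probability `g (z i)`. Being an average, `R` is
positive, preserves constants and has norm one; on `S_m` the random set is almost surely the
support of `z`, so `R f` extends `f`. For continuity, `f` is uniformly continuous on the compact
set `S_m`, hence uniformly close to `A ↦ f (m⁻¹ χ_{A ∩ E})` for a finite `E`; the extension of
that function only involves the finitely many coordinates in `E`.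
-/

noncomputable section

open Finset

section PiUniformity

open Filter Uniformity

lemma Pi.exists_finset_mem_of_mem_uniformity {ι : Type*} {α : ι → Type*}
    [∀ i, UniformSpace (α i)] {u : Set ((∀ i, α i) × ∀ i, α i)} (hu : u ∈ 𝓤 (∀ i, α i)) :
    ∃ I : Finset ι, ∀ x y : ∀ i, α i, (∀ i ∈ I, x i = y i) → (x, y) ∈ u := by
  have hle : ⨅ i, 𝓟 {p : (∀ i, α i) × ∀ i, α i | p.1 i = p.2 i} ≤ 𝓤 (∀ i, α i) := by
    rw [Pi.uniformity]
    refine iInf_mono fun i => ?_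
    rw [← map_le_iff_le_comap, map_principal]
    refine le_trans (principal_mono.2 ?_) refl_le_uniformity
    rintro _ ⟨p, hp, rfl⟩
    exact hp
  obtain ⟨I, hI, -, hIu⟩ := mem_biInf_principal (p := fun _ => True) |>.1 (by simpa using hle hu)
  refine ⟨hI.toFinset, fun x y hxy => hIu ?_⟩
  simp only [Set.mem_iInter]
  exact fun i hi => hxy i (hI.mem_toFinset.2 hi)

lemma UniformContinuous.exists_finset_dist_lt {ι : Type*} {α : ι → Type*}
    [∀ i, UniformSpace (α i)] {β : Type*} [PseudoMetricSpace β] {s : Set (∀ i, α i)}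
    {f : s → β} (hf : UniformContinuous f) {δ : ℝ} (hδ : 0 < δ) :
    ∃ I : Finset ι, ∀ x y : s, (∀ i ∈ I, (x : ∀ i, α i) i = (y : ∀ i, α i) i) →
      dist (f x) (f y) < δ := by
  obtain ⟨u, hu, hus⟩ := mem_comap.1 (hf (Metric.dist_mem_uniformity hδ))
  obtain ⟨I, hI⟩ := Pi.exists_finset_mem_of_mem_uniformity hu
  exact ⟨I, fun x y hxy => @hus (x, y) (hI _ _ hxy)⟩

end PiUniformity

section BernoulliMean

variable {X : Type*} [DecidableEq X]

def subsetWeight (p : X → ℝ) (S A : Finset X) : ℝ :=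
  ∏ i ∈ S, if i ∈ A then p i else 1 - p i

/-- The expectation of `v A` for the random subset `A ⊆ S` containing each `i` independently
with probability `p i`; `subsetWeight p S A` is the probability of `A`. -/
def bernoulliMean (p : X → ℝ) (S : Finset X) (v : Finset X → ℝ) : ℝ :=
  ∑ A ∈ S.powerset, subsetWeight p S A * v A

variable {p : X → ℝ} {S : Finset X} {v w : Finset X → ℝ}

lemma subsetWeight_nonneg (hp : ∀ i, p i ∈ Set.Icc 0 1) (S A : Finset X) :
    0 ≤ subsetWeight p S A :=
  prod_nonneg fun i _ => by
    split_ifs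
    · exact (hp i).1
    · exact sub_nonneg.2 (hp i).2

lemma subsetWeight_eq_zero {A : Finset X} {i : X} (hiS : i ∈ S) (hiA : i ∈ A) (hi : p i = 0) :
    subsetWeight p S A = 0 :=
  prod_eq_zero hiS (by simp [hiA, hi])

lemma bernoulliMean_congr (h : ∀ A ⊆ S, v A = w A) :
    bernoulliMean p S v = bernoulliMean p S w :=
  sum_congr rfl fun A hA => by rw [h A (mem_powerset.1 hA)]

lemma bernoulliMean_add :
    bernoulliMean p S (v + w) = bernoulliMean p S v + bernoulliMean p S w := by
  simp only [bernoulliMean, Pi.add_apply, mul_add, sum_add_distrib]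

lemma bernoulliMean_smul (c : ℝ) : bernoulliMean p S (c • v) = c * bernoulliMean p S v := by
  simp only [bernoulliMean, Pi.smul_apply, smul_eq_mul, mul_sum, mul_left_comm]

lemma bernoulliMean_nonneg (hp : ∀ i, p i ∈ Set.Icc 0 1) (hv : ∀ A, 0 ≤ v A) :
    0 ≤ bernoulliMean p S v :=
  sum_nonneg fun A _ => mul_nonneg (subsetWeight_nonneg hp S A) (hv A)

lemma bernoulliMean_insert {j : X} (hj : j ∉ S) :
    bernoulliMean p (insert j S) v =
      bernoulliMean p S fun A => (1 - p j) * v A + p j * v (insert j A) := by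
  rw [bernoulliMean, sum_powerset_insert hj, bernoulliMean, ← sum_add_distrib]
  refine sum_congr rfl fun A hA => ?_
  have hjA : j ∉ A := fun h => hj (mem_powerset.1 hA h)
  have hS : ∀ i ∈ S, (i ∈ insert j A ↔ i ∈ A) := fun i hi =>
    ⟨fun h => (mem_insert.1 h).resolve_left (ne_of_mem_of_not_mem hi hj), mem_insert_of_mem⟩
  simp only [subsetWeight, prod_insert hj, if_neg hjA, mem_insert_self, if_true]
  rw [prod_congr rfl fun i hi => if_congr (hS i hi) rfl rfl]
  ring

lemma bernoulliMean_union_inter {N K : Finset X} (hNK : Disjoint N K) :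
    bernoulliMean p (N ∪ K) (fun A => v (A ∩ N)) = bernoulliMean p N v := by
  induction K using Finset.induction_on with
  | empty =>
    rw [union_empty]
    exact bernoulliMean_congr fun A hA => by rw [inter_eq_left.2 hA]
  | @insert j K hjK ih =>
    have hjN : j ∉ N := disjoint_right.1 hNK (mem_insert_self j K)
    rw [union_insert, bernoulliMean_insert (by simp [hjN, hjK]),
      ← ih (disjoint_insert_right.1 hNK).2]
    refine bernoulliMean_congr fun A _ => ?_
    rw [insert_inter_of_notMem hjN]
    ring

lemma bernoulliMean_const (c : ℝ) : bernoulliMean p S (fun _ => c) = c := by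
  simpa [bernoulliMean, subsetWeight] using
    bernoulliMean_union_inter (p := p) (v := fun _ => c) (disjoint_empty_left S)

lemma bernoulliMean_of_subset {T : Finset X} (hST : S ⊆ T) (hp : ∀ i ∈ T, i ∉ S → p i = 0) :
    bernoulliMean p T v = bernoulliMean p S v := by
  have hv : bernoulliMean p T v = bernoulliMean p T fun A => v (A ∩ S) := by
    refine sum_congr rfl fun A hA => ?_
    by_cases hAS : A ⊆ S
    · simp only [inter_eq_left.2 hAS]
    · obtain ⟨i, hiA, hiS⟩ := not_subset.1 hAS
      rw [subsetWeight_eq_zero (mem_powerset.1 hA hiA) hiA (hp i (mem_powerset.1 hA hiA) hiS),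
        zero_mul, zero_mul]
  rw [hv, ← union_sdiff_of_subset hST, bernoulliMean_union_inter disjoint_sdiff]

/-- When `p` vanishes off `S`, the random subset lies in `S` almost surely. -/
lemma bernoulliMean_eq_bernoulliMean_inter (hp : ∀ i ∉ S, p i = 0) (E : Finset X) :
    bernoulliMean p E v = bernoulliMean p S fun A => v (A ∩ E) := by
  rw [← bernoulliMean_union_inter (K := S \ E) disjoint_sdiff, union_sdiff_self_eq_union,
    union_comm, bernoulliMean_of_subset subset_union_left fun i _ hi => hp i hi]

lemma bernoulliMean_of_forall_eq_one (hp : ∀ i ∈ S, p i = 1) : bernoulliMean p S v = v S := by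
  rw [bernoulliMean, sum_eq_single_of_mem S (mem_powerset_self S)]
  · rw [subsetWeight, prod_congr rfl fun i hi => by rw [if_pos hi, hp i hi], prod_const_one,
      one_mul]
  · intro A hA hAS
    obtain ⟨i, hiS, hiA⟩ := not_subset.1 fun h => hAS (Subset.antisymm (mem_powerset.1 hA) h)
    rw [subsetWeight, prod_eq_zero hiS (by rw [if_neg hiA, hp i hiS, sub_self]), zero_mul]

lemma abs_bernoulliMean_sub_le (hp : ∀ i, p i ∈ Set.Icc 0 1) {δ : ℝ}
    (h : ∀ A ⊆ S, |v A - w A| ≤ δ) :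
    |bernoulliMean p S v - bernoulliMean p S w| ≤ δ := by
  calc |bernoulliMean p S v - bernoulliMean p S w|
      = |∑ A ∈ S.powerset, subsetWeight p S A * (v A - w A)| := by
        simp only [bernoulliMean, ← sum_sub_distrib, mul_sub]
    _ ≤ ∑ A ∈ S.powerset, subsetWeight p S A * δ := by
        refine (abs_sum_le_sum_abs _ _).trans (sum_le_sum fun A hA => ?_)
        rw [abs_mul, abs_of_nonneg (subsetWeight_nonneg hp S A)]
        exact mul_le_mul_of_nonneg_left (h A (mem_powerset.1 hA)) (subsetWeight_nonneg hp S A)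
    _ = δ := bernoulliMean_const δ

lemma abs_bernoulliMean_le (hp : ∀ i, p i ∈ Set.Icc 0 1) {C : ℝ} (h : ∀ A ⊆ S, |v A| ≤ C) :
    |bernoulliMean p S v| ≤ C := by
  simpa [bernoulliMean_const] using
    abs_bernoulliMean_sub_le (w := fun _ => 0) hp (by simpa using h)

lemma continuous_bernoulliMean {Y : Type*} [TopologicalSpace Y] {p : Y → X → ℝ}
    (hp : ∀ i, Continuous fun y => p y i) (S : Finset X) (v : Finset X → ℝ) :
    Continuous fun y => bernoulliMean (p y) S v := by
  unfold bernoulliMean subsetWeight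
  refine continuous_finsetSum _ fun A _ => ?_
  refine (continuous_finsetProd _ fun i _ => ?_).mul continuous_const
  split_ifs
  exacts [hp i, continuous_const.sub (hp i)]

end BernoulliMean

section Ramp

def ramp (a b t : ℝ) : ℝ := max 0 (min 1 ((t - a) / (b - a)))

variable {a b t : ℝ}

lemma ramp_mem_Icc : ramp a b t ∈ Set.Icc 0 1 :=
  ⟨le_max_left _ _, max_le zero_le_one (min_le_left _ _)⟩

lemma ramp_of_le (hab : a ≤ b) (ht : t ≤ a) : ramp a b t = 0 :=
  max_eq_left <| (min_le_right _ _).trans <|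
    div_nonpos_of_nonpos_of_nonneg (sub_nonpos.2 ht) (sub_nonneg.2 hab)

lemma ramp_of_ge (hab : a < b) (ht : b ≤ t) : ramp a b t = 1 := by
  rw [ramp, min_eq_left ((one_le_div (sub_pos.2 hab)).2 (by linarith)), max_eq_right zero_le_one]

lemma continuous_ramp : Continuous (ramp a b) := by
  unfold ramp
  fun_prop

end Ramp

section Threshold

variable {m : ℕ}

/-- The paper's `ε ∈ (1 / (m + 1), 1 / m)`. -/
def threshold (m : ℕ) : ℝ := ((m : ℝ)⁻¹ + ((m : ℝ) + 1)⁻¹) / 2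

lemma threshold_pos : 0 < threshold m := by
  unfold threshold
  positivity

lemma threshold_lt_inv (hm : 0 < m) : threshold m < (m : ℝ)⁻¹ := by
  have : ((m : ℝ) + 1)⁻¹ < (m : ℝ)⁻¹ := inv_strictAnti₀ (by exact_mod_cast hm) (by linarith)
  unfold threshold
  linarith

lemma one_lt_succ_mul_threshold (hm : 0 < m) : 1 < ((m : ℝ) + 1) * threshold m := by
  have hm' : (0 : ℝ) < m := by exact_mod_cast hm
  unfold threshold
  rw [← sub_pos]
  field_simp
  ring_nf
  positivity

end Threshold

section BigCoordinates

variable {X : Type*} {m : ℕ} {z : X → ℝ}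

lemma card_mul_le_one_of_mem_Bplus (hz : z ∈ Bplus X) {T : Finset X} {ε : ℝ}
    (hT : ∀ i ∈ T, ε ≤ z i) : (T.card : ℝ) * ε ≤ 1 := by
  simpa using (T.card_nsmul_le_sum z ε hT).trans (hz.2 T)

lemma card_le_of_forall_threshold_lt (hm : 0 < m) (hz : z ∈ Bplus X) {T : Finset X}
    (hT : ∀ i ∈ T, threshold m < z i) : T.card ≤ m := by
  have h := card_mul_le_one_of_mem_Bplus hz fun i hi => (hT i hi).le
  have := one_lt_succ_mul_threshold hm
  have : (T.card : ℝ) < m + 1 := lt_of_mul_lt_mul_right (by linarith) threshold_pos.le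
  exact_mod_cast Nat.lt_succ_iff.1 (by exact_mod_cast this)

lemma finite_setOf_threshold_lt (hm : 0 < m) (hz : z ∈ Bplus X) :
    {i | threshold m < z i}.Finite := by
  by_contra h
  obtain ⟨T, hT, hcard⟩ := Set.Infinite.exists_subset_card_eq h (m + 1)
  have := card_le_of_forall_threshold_lt hm hz fun i hi => hT hi
  omega

/-- The paper's `F_z`; it is set to `∅` when `{i | ε < z i}` is infinite, which never happens
on `Bplus X`. -/
def bigCoords (m : ℕ) (z : X → ℝ) : Finset X :=
  open Classical in if h : {i | threshold m < z i}.Finite then h.toFinset else ∅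

lemma mem_bigCoords (hm : 0 < m) (hz : z ∈ Bplus X) {i : X} :
    i ∈ bigCoords m z ↔ threshold m < z i := by
  simp [bigCoords, dif_pos (finite_setOf_threshold_lt hm hz)]

lemma card_bigCoords_le (hm : 0 < m) (hz : z ∈ Bplus X) : (bigCoords m z).card ≤ m :=
  card_le_of_forall_threshold_lt hm hz fun _ => (mem_bigCoords hm hz).1

/-- The values `g₁(z_i)` of the paper. -/
def inclusionProb (m : ℕ) (z : X → ℝ) (i : X) : ℝ := ramp (threshold m) (m : ℝ)⁻¹ (z i)

lemma inclusionProb_mem_Icc (i : X) : inclusionProb m z i ∈ Set.Icc 0 1 := ramp_mem_Icc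

lemma continuous_inclusionProb (i : X) : Continuous fun z : X → ℝ => inclusionProb m z i :=
  continuous_ramp.comp (continuous_apply i)

lemma inclusionProb_eq_zero (hm : 0 < m) (hz : z ∈ Bplus X) {i : X} (hi : i ∉ bigCoords m z) :
    inclusionProb m z i = 0 :=
  ramp_of_le (threshold_lt_inv hm).le (not_lt.1 ((mem_bigCoords hm hz).not.1 hi))

lemma isClosed_Bplus : IsClosed (Bplus X) := by
  simp only [Bplus, Set.ofPred_and, Set.ofPred_forall]
  exact (isClosed_iInter fun i => isClosed_le continuous_const (continuous_apply i)).inter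
    (isClosed_iInter fun s => isClosed_le (continuous_finsetSum _ fun i _ => continuous_apply i)
      continuous_const)

end BigCoordinates

section Sm

variable {X : Type*} [DecidableEq X] {m : ℕ}

def scaledChar (m : ℕ) (A : Finset X) : X → ℝ := fun i => if i ∈ A then (m : ℝ)⁻¹ else 0

lemma scaledChar_mem_Sm {A : Finset X} (hA : A.card ≤ m) : scaledChar m A ∈ Sm X m :=
  ⟨A, hA, rfl⟩

lemma bigCoords_scaledChar (hm : 0 < m) {A : Finset X} (hz : scaledChar m A ∈ Bplus X) :
    bigCoords m (scaledChar m A) = A := by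
  ext i
  rw [mem_bigCoords hm hz, scaledChar]
  split_ifs with hi
  · simp [hi, threshold_lt_inv hm]
  · simp [hi, threshold_pos.le]

lemma Sm_subset_Bplus : Sm X m ⊆ Bplus X := by
  rintro _ ⟨A, hA, rfl⟩
  refine ⟨fun i => by dsimp only; split_ifs <;> positivity, fun s => ?_⟩
  calc ∑ i ∈ s, scaledChar m A i = ((s ∩ A).card : ℝ) * (m : ℝ)⁻¹ := by
        simp [scaledChar]
    _ ≤ (m : ℝ) * (m : ℝ)⁻¹ := by
        gcongr
        exact_mod_cast (card_le_card inter_subset_right).trans hA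
    _ ≤ 1 := by
        rcases m.eq_zero_or_pos with rfl | hm
        · simp
        · rw [mul_inv_cancel₀ (by exact_mod_cast hm.ne')]

lemma Sm_eq_Bplus_inter_pi (hm : 0 < m) :
    Sm X m = Bplus X ∩ Set.univ.pi fun _ => {0, (m : ℝ)⁻¹} := by
  refine Set.Subset.antisymm (fun z hz => ⟨Sm_subset_Bplus hz, ?_⟩) fun z ⟨hzB, hz⟩ => ?_
  · obtain ⟨A, -, rfl⟩ := hz
    intro i _
    by_cases hi : i ∈ A <;> simp [hi]
  · refine ⟨bigCoords m z, card_bigCoords_le hm hzB, funext fun i => ?_⟩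
    obtain h | h : z i = 0 ∨ z i = (m : ℝ)⁻¹ := hz i (Set.mem_univ i)
    · simp [mem_bigCoords hm hzB, h, threshold_pos.le]
    · simp [mem_bigCoords hm hzB, h, threshold_lt_inv hm]

lemma isCompact_Sm (hm : 0 < m) : IsCompact (Sm X m) := by
  rw [Sm_eq_Bplus_inter_pi hm]
  exact (isCompact_univ_pi fun _ => (Set.toFinite _).isCompact).inter_left isClosed_Bplus

end Sm

namespace BoundedContinuousFunction

lemma opNorm_eq_one_of_map_const {α β : Type*} [TopologicalSpace α]
    [TopologicalSpace β] [Nonempty α] [Nonempty β] {R : (α →ᵇ ℝ) →L[ℝ] (β →ᵇ ℝ)}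
    (hR : ‖R‖ ≤ 1) (hR1 : R (const α 1) = const β 1) : ‖R‖ = 1 := by
  refine le_antisymm hR ?_
  simpa [hR1, norm_const_eq] using R.le_opNorm (const α 1)

end BoundedContinuousFunction

section Extension

variable {X : Type*} [DecidableEq X] {m : ℕ}

/-- `f (m⁻¹ χ_A)`, with the junk value `0` when `#A > m`. -/
def sample (f : BoundedContinuousFunction (Sm X m) ℝ) (A : Finset X) : ℝ :=
  if h : A.card ≤ m then f ⟨scaledChar m A, scaledChar_mem_Sm h⟩ else 0

/-- The paper's `R f z`. -/
def extension (f : BoundedContinuousFunction (Sm X m) ℝ) (z : X → ℝ) : ℝ :=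
  bernoulliMean (inclusionProb m z) (bigCoords m z) (sample f)

variable {z : X → ℝ} (f g : BoundedContinuousFunction (Sm X m) ℝ)

lemma abs_sample_le (A : Finset X) : |sample f A| ≤ ‖f‖ := by
  unfold sample
  split_ifs
  · exact f.norm_coe_le_norm _
  · simp

lemma sample_add : sample (f + g) = sample f + sample g := by
  ext A
  by_cases h : A.card ≤ m <;> simp [sample, h]

lemma sample_smul (c : ℝ) : sample (c • f) = c • sample f := by
  ext A
  by_cases h : A.card ≤ m <;> simp [sample, h]

lemma extension_add (z : X → ℝ) : extension (f + g) z = extension f z + extension g z := by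
  simp only [extension, sample_add, bernoulliMean_add]

lemma extension_smul (c : ℝ) (z : X → ℝ) : extension (c • f) z = c * extension f z := by
  simp only [extension, sample_smul, bernoulliMean_smul]

lemma extension_nonneg (hf : ∀ x, 0 ≤ f x) (z : X → ℝ) : 0 ≤ extension f z :=
  bernoulliMean_nonneg inclusionProb_mem_Icc fun A => by
    unfold sample
    split_ifs
    exacts [hf _, le_rfl]

lemma abs_extension_le (z : X → ℝ) : |extension f z| ≤ ‖f‖ :=
  abs_bernoulliMean_le inclusionProb_mem_Icc fun A _ => abs_sample_le f A

lemma extension_const (hm : 0 < m) (hz : z ∈ Bplus X) (c : ℝ) :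
    extension (BoundedContinuousFunction.const (Sm X m) c) z = c := by
  refine (bernoulliMean_congr fun A hA => ?_).trans (bernoulliMean_const c)
  rw [sample, dif_pos ((card_le_card hA).trans (card_bigCoords_le hm hz))]
  rfl

lemma extension_of_mem_Sm (hm : 0 < m) (hz : z ∈ Sm X m) : extension f z = f ⟨z, hz⟩ := by
  obtain ⟨A, hA, hzA⟩ := id hz
  change z = scaledChar m A at hzA
  subst hzA
  have hAB : scaledChar m A ∈ Bplus X := Sm_subset_Bplus (scaledChar_mem_Sm hA)
  have hp : ∀ i ∈ A, inclusionProb m (scaledChar m A) i = 1 := fun i hi =>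
    ramp_of_ge (threshold_lt_inv hm) (by simp [scaledChar, hi])
  rw [extension, bigCoords_scaledChar hm hAB, bernoulliMean_of_forall_eq_one hp, sample,
    dif_pos hA]

lemma continuousOn_extension (hm : 0 < m) : ContinuousOn (extension f) (Bplus X) := by
  have : CompactSpace (Sm X m) := isCompact_iff_compactSpace.1 (isCompact_Sm hm)
  refine continuousOn_of_uniform_approx_of_continuousOn fun u hu => ?_
  obtain ⟨δ, hδ, hδu⟩ := Metric.mem_uniformity_dist.1 hu
  obtain ⟨E, hE⟩ :=
    (CompactSpace.uniformContinuous_of_continuous f.continuous).exists_finset_dist_lt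
      (half_pos hδ)
  refine ⟨fun z => bernoulliMean (inclusionProb m z) E (sample f),
    (continuous_bernoulliMean continuous_inclusionProb E (sample f)).continuousOn,
    fun z hz => hδu ?_⟩
  beta_reduce
  rw [extension, bernoulliMean_eq_bernoulliMean_inter (fun i => inclusionProb_eq_zero hm hz) E,
    Real.dist_eq]
  refine (abs_bernoulliMean_sub_le inclusionProb_mem_Icc fun A hA => ?_).trans_lt
    (half_lt_self hδ)
  have hA' : A.card ≤ m := (card_le_card hA).trans (card_bigCoords_le hm hz)
  have hAE : (A ∩ E).card ≤ m := (card_le_card inter_subset_left).trans hA'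
  rw [sample, sample, dif_pos hA', dif_pos hAE, ← Real.dist_eq]
  exact (hE _ _ fun i hi => by simp [scaledChar, hi]).le

def extensionCLM (hm : 0 < m) :
    BoundedContinuousFunction (Sm X m) ℝ →L[ℝ] BoundedContinuousFunction (Bplus X) ℝ :=
  LinearMap.mkContinuous
    { toFun := fun f => .ofNormedAddCommGroup ((Bplus X).domRestrict (extension f))
        (continuousOn_iff_continuous_domRestrict.1 (continuousOn_extension f hm)) ‖f‖
        fun z => (Real.norm_eq_abs _).trans_le (abs_extension_le f z)
      map_add' := fun f g => by ext z; exact extension_add f g z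
      map_smul' := fun c f => by ext z; exact extension_smul f c z }
    1 fun f => by
      rw [one_mul]
      exact BoundedContinuousFunction.norm_ofNormedAddCommGroup_le _ (norm_nonneg f)
        fun z : Bplus X => (Real.norm_eq_abs _).trans_le (abs_extension_le f z)

end Extension

end

/-- For each `m ≥ 1` there is a regular extension operator `R : C(S_m) → C(B_1^+)`:
a bounded linear operator of norm one, positive, preserving constants, with
`R(f)|_{S_m} = f`. -/
theorem exists_regular_extension_operator (X : Type*) [DecidableEq X] (m : ℕ) (hm : 1 ≤ m) :
    ∃ R : BoundedContinuousFunction (Sm X m) ℝ →L[ℝ] BoundedContinuousFunction (Bplus X) ℝ,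
      ‖R‖ = 1 ∧
      (∀ f : BoundedContinuousFunction (Sm X m) ℝ, (∀ x, 0 ≤ f x) → ∀ y, 0 ≤ R f y) ∧
      (∀ c : ℝ, R (BoundedContinuousFunction.const _ c) = BoundedContinuousFunction.const _ c) ∧
      (∀ (f : BoundedContinuousFunction (Sm X m) ℝ) (z : Bplus X)
        (hz : (z : X → ℝ) ∈ Sm X m), R f z = f ⟨z, hz⟩) := by
  have hconst (c : ℝ) :
      extensionCLM hm (.const (Sm X m) c) = BoundedContinuousFunction.const (Bplus X) c := by
    ext z
    exact extension_const hm z.2 c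
  have : Nonempty (Sm X m) := ⟨⟨scaledChar m ∅, scaledChar_mem_Sm (by simp)⟩⟩
  have : Nonempty (Bplus X) := ⟨⟨0, fun _ => le_rfl, fun _ => by simp⟩⟩
  have hnorm : ‖extensionCLM (X := X) hm‖ ≤ 1 := LinearMap.mkContinuous_norm_le _ zero_le_one _
  exact ⟨extensionCLM hm, BoundedContinuousFunction.opNorm_eq_one_of_map_const hnorm (hconst 1),
    fun f hf z => extension_nonneg f hf z, hconst, fun f z hz => extension_of_mem_Sm f hm hz⟩
end
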